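/- Define the (q,t)-ribbon number for a composition α of n by inclusion–exclusion: r_α(q,t) := Σ_{β refined by α} (-1)^{ℓ(α) - ℓ(β)} [n choose β]_{q,t}. Then for the hook composition α = (1^k, m) with n = m + k, one has S_{(m,1^k)}(1,t,...,t^k) = r_{(1^k,m)}(q,t). More generally, for n ≥ k, S_{(m,1^k)}(1,t,...,t^n) = [m+n choose n-k]_{q,t} · r_{(1^k,m)}(q, t^{q^{n-k}}). -/

import Mathlib

noncomputable section

/-- The (q,t)-factorial `m!_{q,t}`, as a function of `t`. -/
def qtfact (q m : ℕ) (t : RatFunc ℚ) : RatFunc ℚ :=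
  ∏ i ∈ Finset.range m, (1 - t ^ (q ^ m - q ^ i))

/-- The (q,t)-multinomial `[n choose β]_{q,t} = n!_{q,t}/β!_{q,t}` for a composition `β`
of `n`, where `β!_{q,t} := ∏_s β_s!_{q,t^{q^{σ_{s-1}}}}`. -/
def qtmultiC (q n : ℕ) (c : Composition n) (t : RatFunc ℚ) : RatFunc ℚ :=
  qtfact q n t / ∏ s : Fin c.length, qtfact q (c.blocksFun s) (t ^ q ^ c.sizeUpTo (s : ℕ))

/-- The (q,t)-ribbon number `r_α(q,t) := Σ_{β refined by α} (-1)^{ℓ(α)-ℓ(β)} [n choose β]_{q,t}`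
(as a function of `t`). `β` is refined by `α` iff the partial-sum set (boundaries) of `β`
is contained in that of `α`. -/
def ribbonQT (q n : ℕ) (c : Composition n) (t : RatFunc ℚ) : RatFunc ℚ :=
  ∑ b ∈ Finset.univ.filter (fun b : Composition n => b.boundaries ⊆ c.boundaries),
    (-1 : RatFunc ℚ) ^ (c.length - b.length) * qtmultiC q n b t

/-- The reverse hook composition `(1^k, m)` of `k + m`. -/
def hookComp (k m : ℕ) (hm : 0 < m) : Composition (k + m) where
  blocks := List.replicate k 1 ++ [m]
  blocks_pos := by
    intro i hi
    rcases List.mem_append.mp hi with h | h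
    · rcases List.eq_of_mem_replicate h with rfl; exact one_pos
    · rcases List.mem_singleton.mp h with rfl; exact hm
  blocks_sum := by simp [List.sum_replicate, smul_eq_mul]

/-- The principal specialization `S_λ(1, t, …, t^{N-1})` via the Vandermonde product. -/
def Sspec (q N : ℕ) (lam : ℕ → ℕ) (t : RatFunc ℚ) : RatFunc ℚ :=
  ∏ j ∈ Finset.range N, ∏ i ∈ Finset.range j,
    (t ^ q ^ (lam (N - j) + j) - t ^ q ^ (lam (N - i) + i)) / (t ^ q ^ j - t ^ q ^ i)

/-- The hook partition `(m, 1^k)`, as a 1-indexed sequence of parts. -/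
def hookLam (m k : ℕ) : ℕ → ℕ := fun i => if i = 1 then m else if i ≤ k + 1 then 1 else 0

/-- The (q,t)-binomial `[N choose k]_{q,t}` in product form. -/
def qtbin (q N k : ℕ) (t : RatFunc ℚ) : RatFunc ℚ :=
  ∏ i ∈ Finset.range k, (1 - t ^ (q ^ N - q ^ i)) / (1 - t ^ (q ^ k - q ^ i))

/-!
With `x a := t ^ q ^ a`, the principal specialization is a ratio of Vandermonde products whose
exponent sequence for the hook is `0, …, n` with `n - k` deleted and `m + n` appended. Deleting a
point from a Vandermonde product divides it by the differences to that point, so the ratio is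
`qtbin` times `∏_{n-k < a ≤ n} (x (m+n) - x a) / (x a - x (n-k))`.

Compositions of `N = k + m` coarser than `(1^k, m)` are determined by their inner boundaries
`S ⊆ {1, …, k}`, and the multinomial of such a composition is
`∏_{i<N} (x N - x i) / (x (e i) - x i)`, `e i` being the first boundary above `i`. In the
alternating sum over `S`, pairing `S` with `insert (d+1) S` and using
`1/((x-a)(y-x)) - 1/((y-a)(y-x)) = 1/((x-a)(y-a))` splits off the factor
`(x N - x (d+1)) / (x (d+1) - x 0)`; hence the ribbon number is
`∏_{0 < b ≤ k} (x N - x b) / (x b - x 0)`, which becomes the second factor above after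
`t ↦ t ^ q ^ (n-k)`.
-/

open Finset Function

lemma one_sub_pow_sub_div_one_sub_pow_sub {F : Type*} [Field F] {s : F} (hs : s ≠ 0)
    {a b c : ℕ} (hab : a ≤ b) (hac : a ≤ c) :
    (1 - s ^ (b - a)) / (1 - s ^ (c - a)) = (s ^ b - s ^ a) / (s ^ c - s ^ a) := by
  have key : ∀ {d}, a ≤ d → 1 - s ^ (d - a) = -(s ^ d - s ^ a) / s ^ a := fun h => by
    rw [eq_div_iff (pow_ne_zero _ hs), sub_mul, ← pow_add, Nat.sub_add_cancel h]; ring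
  rw [key hab, key hac, div_div_div_cancel_right₀ (pow_ne_zero _ hs), neg_div_neg_eq]

lemma RatFunc.X_pow_injective {F : Type*} [Field F] :
    Injective fun a : ℕ => (RatFunc.X : RatFunc F) ^ a := by
  intro a b h
  simpa [← RatFunc.algebraMap_X, ← map_pow] using congrArg RatFunc.intDegree h

section Vandermonde

variable {R : Type*} [CommRing R]

def vandermondeProd (f : ℕ → R) (N : ℕ) : R :=
  ∏ j ∈ range N, ∏ i ∈ range j, (f j - f i)

def succAbove (c j : ℕ) : ℕ := if j < c then j else j + 1

lemma prod_range_succAbove {M : Type*} [CommMonoid M] (h : ℕ → M) {c n : ℕ} (hc : c ≤ n) :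
    ∏ i ∈ range n, h (succAbove c i) = (∏ i ∈ range c, h i) * ∏ a ∈ Ioc c n, h a := by
  rw [← prod_range_mul_prod_Ico _ hc, ← Ico_add_one_add_one_eq_Ioc, ← prod_Ico_add']
  congr 1 <;> refine prod_congr rfl fun i hi => ?_
  · rw [succAbove, if_pos (mem_range.1 hi)]
  · rw [succAbove, if_neg (mem_Ico.1 hi).1.not_gt]

lemma vandermondeProd_succ (f : ℕ → R) (N : ℕ) :
    vandermondeProd f (N + 1) = vandermondeProd f N * ∏ i ∈ range N, (f N - f i) :=
  prod_range_succ _ _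

lemma vandermondeProd_succAbove (f : ℕ → R) {c n : ℕ} (hc : c ≤ n) :
    vandermondeProd (f ∘ succAbove c) n * (∏ i ∈ range c, (f c - f i)) *
        ∏ a ∈ Ioc c n, (f a - f c) = vandermondeProd f (n + 1) := by
  induction n, hc using Nat.le_induction with
  | base =>
    have hbelow : vandermondeProd (f ∘ succAbove c) c = vandermondeProd f c :=
      prod_congr rfl fun j hj => prod_congr rfl fun i hi => by
        simp [succAbove, mem_range.1 hj, (mem_range.1 hi).trans (mem_range.1 hj)]
    rw [hbelow, Ioc_self, prod_empty, mul_one, vandermondeProd_succ]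
  | succ n hcn ih =>
    have hrow : ∏ i ∈ range n, ((f ∘ succAbove c) n - (f ∘ succAbove c) i)
        = (∏ i ∈ range c, (f (n + 1) - f i)) * ∏ a ∈ Ioc c n, (f (n + 1) - f a) := by
      simp only [Function.comp_apply, succAbove, if_neg hcn.not_gt]
      exact prod_range_succAbove (f (n + 1) - f ·) hcn
    have hcol : ∏ i ∈ range (n + 1), (f (n + 1) - f i)
        = (∏ i ∈ range c, (f (n + 1) - f i)) * (f (n + 1) - f c) *
            ∏ a ∈ Ioc c n, (f (n + 1) - f a) := by
      rw [← prod_range_mul_prod_Ico _ (by omega : c ≤ n + 1),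
        prod_eq_prod_Ico_succ_bot (by omega : c < n + 1), Ico_add_one_add_one_eq_Ioc, mul_assoc]
    rw [vandermondeProd_succ, hrow, prod_Ioc_succ_top hcn, vandermondeProd_succ _ (n + 1), ← ih,
      hcol]
    ring

lemma prod_vandermonde_ratio {F : Type*} [Field F] {f : ℕ → F} (hf : Injective f) {c n M : ℕ}
    (hc : c ≤ n) {μ : ℕ → ℕ} (hμ : ∀ j < n, μ j = succAbove c j) (hμn : μ n = M) :
    ∏ j ∈ range (n + 1), ∏ i ∈ range j, (f (μ j) - f (μ i)) / (f j - f i)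
      = (∏ i ∈ range c, (f M - f i) / (f c - f i)) *
          ∏ a ∈ Ioc c n, (f M - f a) / (f a - f c) := by
  have hV : vandermondeProd f (n + 1) ≠ 0 :=
    prod_ne_zero_iff.2 fun j _ => prod_ne_zero_iff.2 fun i hi =>
      sub_ne_zero.2 (hf.ne (mem_range.1 hi).ne')
  rw [← vandermondeProd_succAbove f hc] at hV
  have hnum : vandermondeProd (f ∘ μ) (n + 1) = vandermondeProd (f ∘ succAbove c) n *
      ((∏ i ∈ range c, (f M - f i)) * ∏ a ∈ Ioc c n, (f M - f a)) := by
    rw [vandermondeProd, prod_range_succ, ← prod_range_succAbove (f M - f ·) hc]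
    congr 1
    · exact prod_congr rfl fun j hj => prod_congr rfl fun i hi => by
        simp [hμ j (mem_range.1 hj), hμ i ((mem_range.1 hi).trans (mem_range.1 hj))]
    · exact prod_congr rfl fun i hi => by simp [hμn, hμ i (mem_range.1 hi)]
  calc ∏ j ∈ range (n + 1), ∏ i ∈ range j, (f (μ j) - f (μ i)) / (f j - f i)
      = vandermondeProd (f ∘ μ) (n + 1) / vandermondeProd f (n + 1) := by
        simp only [vandermondeProd, ← prod_div_distrib, Function.comp_apply]
    _ = _ := by
        rw [hnum, ← vandermondeProd_succAbove f hc, mul_assoc _ (∏ i ∈ range c, _),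
          mul_div_mul_left _ _ (left_ne_zero_of_mul (left_ne_zero_of_mul hV)),
          mul_div_mul_comm, prod_div_distrib, prod_div_distrib]

end Vandermonde

section NextAbove

def nextAbove (S : Finset ℕ) (N i : ℕ) : ℕ :=
  (insert N {x ∈ S | i < x}).min' (insert_nonempty _ _)

variable {S : Finset ℕ} {N i : ℕ}

lemma lt_nextAbove (hi : i < N) : i < nextAbove S N i :=
  (lt_min'_iff _ _).2 fun y hy => by
    rcases mem_insert.1 hy with rfl | hy
    exacts [hi, (mem_filter.1 hy).2]

@[simp]
lemma nextAbove_empty : nextAbove ∅ N i = N := by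
  simp [nextAbove]

lemma nextAbove_insert_of_le {a : ℕ} (h : a ≤ i) :
    nextAbove (insert a S) N i = nextAbove S N i := by
  simp only [nextAbove, filter_insert, if_neg h.not_gt]

lemma nextAbove_insert_add_one (h : i + 1 ≤ N) : nextAbove (insert (i + 1) S) N i = i + 1 :=
  le_antisymm (min'_le _ _ (by simp)) (le_min' _ _ _ fun y hy => by
    rcases mem_insert.1 hy with rfl | hy
    exacts [h, (mem_filter.1 hy).2])

lemma nextAbove_of_add_one_notMem (h : i + 1 ∉ S) :
    nextAbove S N i = nextAbove S N (i + 1) := by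
  have : {x ∈ S | i < x} = {x ∈ S | i + 1 < x} :=
    filter_congr fun x hx => by
      have : x ≠ i + 1 := fun hx' => h (hx' ▸ hx)
      omega
  simp only [nextAbove, this]

end NextAbove

section AlternatingSum

variable {F : Type*} [Field F] {u : ℕ → F} {N k : ℕ}

lemma partial_fraction_pair {a x y z σ R : F} (hx : x - a ≠ 0) (hy : y - a ≠ 0)
    (hxy : y - x ≠ 0) :
    -σ * ((y - a)⁻¹ * ((z - x) / (y - x) * R)) + σ * ((x - a)⁻¹ * ((z - x) / (y - x) * R))
      = (z - x) / (x - a) * (σ * ((y - a)⁻¹ * R)) := by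
  field_simp
  ring

-- The free point `a` stands in for `u d` in the first factor; this is what lets the induction on
-- `d` close.
lemma alternating_sum_nextAbove_from (hu : Injective u) (hk : k < N) {a : F} {d : ℕ}
    (hdk : d ≤ k) (ha : ∀ j, d < j → u j ≠ a) :
    ∑ S ∈ (Ioc d k).powerset, (-1) ^ (k - d - #S) * ((u (nextAbove S N d) - a)⁻¹ *
        ∏ i ∈ Ico (d + 1) N, (u N - u i) / (u (nextAbove S N i) - u i))
      = (u N - a)⁻¹ * ∏ b ∈ Ioc d k, (u N - u b) / (u b - a) := by
  induction hdk using Nat.decreasingInduction with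
  | self =>
    simp only [Ioc_self, powerset_empty, sum_singleton, card_empty, Nat.sub_self, pow_zero,
      one_mul, nextAbove_empty, prod_empty, mul_one]
    rw [prod_eq_one fun i hi => div_self (sub_ne_zero.2 (hu.ne (mem_Ico.1 hi).2.ne')), mul_one]
  | of_succ d hdk ih =>
    rw [← insert_Ioc_add_one_left_eq_Ioc hdk, sum_powerset_insert (by simp),
      prod_insert (by simp), mul_left_comm, ← ih (fun j hj => ha j (by omega)), mul_sum,
      ← sum_add_distrib]
    refine sum_congr rfl fun S hS => ?_
    have hdS : d + 1 ∉ S := fun h => by simpa using mem_powerset.1 hS h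
    have hcard : #S ≤ k - (d + 1) := by simpa using card_le_card (mem_powerset.1 hS)
    have hE : d + 1 < nextAbove S N (d + 1) := lt_nextAbove (by omega)
    have hrest :
        ∏ i ∈ Ico (d + 1 + 1) N, (u N - u i) / (u (nextAbove (insert (d + 1) S) N i) - u i)
          = ∏ i ∈ Ico (d + 1 + 1) N, (u N - u i) / (u (nextAbove S N i) - u i) :=
      prod_congr rfl fun i hi => by rw [nextAbove_insert_of_le (by simp at hi; omega)]
    rw [card_insert_of_notMem hdS, nextAbove_insert_add_one (by omega),
      nextAbove_of_add_one_notMem hdS, prod_eq_prod_Ico_succ_bot (by omega : d + 1 < N),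
      prod_eq_prod_Ico_succ_bot (by omega : d + 1 < N), nextAbove_insert_of_le le_rfl, hrest,
      show k - d - (#S + 1) = k - (d + 1) - #S by omega,
      show k - d - #S = k - (d + 1) - #S + 1 by omega, pow_succ, mul_neg_one]
    exact partial_fraction_pair (sub_ne_zero.2 (ha _ (by omega)))
      (sub_ne_zero.2 (ha _ (by omega))) (sub_ne_zero.2 (hu.ne hE.ne'))

lemma alternating_sum_nextAbove (hu : Injective u) (hk : k < N) :
    ∑ S ∈ (Ioc 0 k).powerset, (-1) ^ (k - #S) *
        ∏ i ∈ range N, (u N - u i) / (u (nextAbove S N i) - u i)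
      = ∏ b ∈ Ioc 0 k, (u N - u b) / (u b - u 0) := by
  have h0N : u N - u 0 ≠ 0 := sub_ne_zero.2 (hu.ne (by omega))
  have hsum := alternating_sum_nextAbove_from (N := N) hu hk (a := u 0) (Nat.zero_le k)
    fun j hj => hu.ne hj.ne'
  rw [← mul_right_inj' h0N, ← mul_assoc, mul_inv_cancel₀ h0N, one_mul, mul_sum] at hsum
  rw [← hsum]
  refine sum_congr rfl fun S _ => ?_
  rw [range_eq_Ico, prod_eq_prod_Ico_succ_bot (by omega), Nat.sub_zero]
  ring

end AlternatingSum

namespace Composition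

variable {n : ℕ}

def innerBoundaries (b : Composition n) : Finset ℕ :=
  {x ∈ b.boundaries.map Fin.valEmbedding | x ≠ 0 ∧ x ≠ n}

lemma mem_map_boundaries {b : Composition n} {x : ℕ} :
    x ∈ b.boundaries.map Fin.valEmbedding ↔ ∃ j ≤ b.length, b.sizeUpTo j = x := by
  simp only [boundaries, map_map, mem_map, mem_univ, true_and]
  exact ⟨fun ⟨j, h⟩ => ⟨j, Nat.le_of_lt_succ j.2, h⟩,
    fun ⟨j, hj, h⟩ => ⟨⟨j, Nat.lt_succ_of_le hj⟩, h⟩⟩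

lemma map_boundaries_eq (b : Composition n) :
    b.boundaries.map Fin.valEmbedding = insert 0 (insert n b.innerBoundaries) := by
  ext x
  by_cases h0 : x = 0
  · subst h0; simpa using mem_map_boundaries.2 ⟨0, Nat.zero_le _, b.sizeUpTo_zero⟩
  by_cases hn : x = n
  · subst hn; simpa using mem_map_boundaries.2 ⟨_, le_rfl, b.sizeUpTo_length⟩
  simp [innerBoundaries, h0, hn]

lemma innerBoundaries_subset_Ioo (b : Composition n) : b.innerBoundaries ⊆ Ioo 0 n := by
  intro x hx
  obtain ⟨hx, hx0, hxn⟩ := mem_filter.1 hx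
  obtain ⟨j, -, rfl⟩ := mem_map_boundaries.1 hx
  have := b.sizeUpTo_le j
  simp only [mem_Ioo]; omega

lemma length_eq_card_innerBoundaries_add_one (hn : 0 < n) (b : Composition n) :
    b.length = #b.innerBoundaries + 1 := by
  have h := b.card_boundaries_eq_succ_length
  have h0 : 0 ∉ insert n b.innerBoundaries := by
    simpa [hn.ne] using fun h => (mem_Ioo.1 (b.innerBoundaries_subset_Ioo h)).1.ne rfl
  have hn' : n ∉ b.innerBoundaries := fun h =>
    (mem_Ioo.1 (b.innerBoundaries_subset_Ioo h)).2.ne rfl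
  rw [← card_map Fin.valEmbedding, map_boundaries_eq, card_insert_of_notMem h0,
    card_insert_of_notMem hn'] at h
  omega

lemma boundaries_subset_iff {b c : Composition n} :
    b.boundaries ⊆ c.boundaries ↔ b.innerBoundaries ⊆ c.innerBoundaries := by
  rw [← map_subset_map (f := Fin.valEmbedding), map_boundaries_eq, map_boundaries_eq]
  refine ⟨fun h x hx => ?_, fun h => insert_subset_insert _ (insert_subset_insert _ h)⟩
  have hx' := b.innerBoundaries_subset_Ioo hx
  simp only [mem_Ioo] at hx'
  simpa [hx'.1.ne', hx'.2.ne] using h (mem_insert_of_mem (mem_insert_of_mem hx))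

lemma sizeUpTo_index_succ (b : Composition n) (i : Fin n) :
    b.sizeUpTo (b.index i + 1) = nextAbove b.innerBoundaries n i := by
  have hi := b.lt_sizeUpTo_index_succ i
  simp only [Fin.val_succ] at hi
  refine le_antisymm (le_min' _ _ _ fun y hy => ?_) (min'_le _ _ ?_)
  · rcases mem_insert.1 hy with rfl | hy
    · exact b.sizeUpTo_le _
    obtain ⟨hy, hiy⟩ := mem_filter.1 hy
    obtain ⟨j, -, rfl⟩ := mem_map_boundaries.1 (mem_filter.1 hy).1
    refine b.monotone_sizeUpTo (Nat.succ_le_of_lt (lt_of_not_ge fun hj => ?_))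
    have := b.monotone_sizeUpTo hj
    have := b.sizeUpTo_index_le i
    omega
  · have hb : b.sizeUpTo (b.index i + 1) ∈ b.boundaries.map Fin.valEmbedding :=
      mem_map_boundaries.2 ⟨_, (b.index i).2, rfl⟩
    rw [map_boundaries_eq] at hb
    rcases mem_insert.1 hb with h | hb
    · omega
    rcases mem_insert.1 hb with h | hb
    · rw [h]; exact mem_insert_self _ _
    · exact mem_insert_of_mem (mem_filter.2 ⟨hb, hi⟩)

def ofInnerBoundaries (n : ℕ) (S : Finset ℕ) : Composition n :=
  CompositionAsSet.toComposition
    { boundaries := {x : Fin (n + 1) | (x : ℕ) = 0 ∨ (x : ℕ) = n ∨ (x : ℕ) ∈ S}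
      zero_mem := by simp
      getLast_mem := by simp }

lemma innerBoundaries_ofInnerBoundaries {S : Finset ℕ} (hS : S ⊆ Ioo 0 n) :
    (ofInnerBoundaries n S).innerBoundaries = S := by
  ext x
  simp only [innerBoundaries, ofInnerBoundaries, CompositionAsSet.toComposition_boundaries,
    mem_filter, mem_map, mem_univ, true_and, Fin.valEmbedding_apply]
  constructor
  · rintro ⟨⟨y, hy, rfl⟩, h0, hn⟩
    tauto
  · intro hx
    have := mem_Ioo.1 (hS hx)
    exact ⟨⟨⟨x, by omega⟩, Or.inr (Or.inr hx), rfl⟩, by omega, by omega⟩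

lemma ofInnerBoundaries_innerBoundaries (b : Composition n) :
    ofInnerBoundaries n b.innerBoundaries = b := by
  conv_rhs => rw [← (compositionEquiv n).symm_apply_apply b]
  refine congrArg CompositionAsSet.toComposition (CompositionAsSet.ext ?_)
  ext x
  change _ ↔ x ∈ b.boundaries
  rw [← mem_map' Fin.valEmbedding (s := b.boundaries), map_boundaries_eq]
  simp

end Composition

section Ribbon

lemma qtmultiC_eq_prod_nextAbove (q : ℕ) {n : ℕ} (b : Composition n) (s : RatFunc ℚ) :
    qtmultiC q n b s = ∏ i ∈ range n,
      (1 - s ^ (q ^ n - q ^ i)) / (1 - s ^ (q ^ nextAbove b.innerBoundaries n i - q ^ i)) := by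
  set g : Fin n → RatFunc ℚ := fun i => 1 - s ^ (q ^ b.sizeUpTo (b.index i + 1) - q ^ (i : ℕ))
  have hblock (j : Fin b.length) : qtfact q (b.blocksFun j) (s ^ q ^ b.sizeUpTo j)
      = ∏ r : Fin (b.blocksFun j), g (b.blocksFinEquiv ⟨j, r⟩) := by
    rw [qtfact, ← Fin.prod_univ_eq_prod_range]
    refine prod_congr rfl fun r _ => ?_
    simp only [g, Composition.blocksFinEquiv, Equiv.coe_fn_mk, b.index_embedding,
      b.coe_embedding, ← pow_mul, Nat.mul_sub, ← pow_add, b.sizeUpTo_succ']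
  rw [qtmultiC, prod_congr rfl fun j _ => hblock j,
    ← Fintype.prod_sigma (fun p => g (b.blocksFinEquiv p)),
    b.blocksFinEquiv.prod_comp g, qtfact, ← Fin.prod_univ_eq_prod_range (fun i => 1 - _),
    ← prod_div_distrib, ← Fin.prod_univ_eq_prod_range]
  simp only [g, b.sizeUpTo_index_succ]

lemma ribbonQT_eq_sum_powerset (q : ℕ) {n : ℕ} (hn : 0 < n) (c : Composition n)
    (s : RatFunc ℚ) :
    ribbonQT q n c s = ∑ S ∈ c.innerBoundaries.powerset, (-1) ^ (#c.innerBoundaries - #S) *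
      ∏ i ∈ range n, (1 - s ^ (q ^ n - q ^ i)) / (1 - s ^ (q ^ nextAbove S n i - q ^ i)) := by
  refine sum_nbij' Composition.innerBoundaries (Composition.ofInnerBoundaries n) ?_ ?_
    (fun b _ => b.ofInnerBoundaries_innerBoundaries) ?_ ?_
  · intro b hb
    simpa [Composition.boundaries_subset_iff] using hb
  · intro S hS
    have hS' : S ⊆ Ioo 0 n := (mem_powerset.1 hS).trans c.innerBoundaries_subset_Ioo
    simpa [Composition.boundaries_subset_iff, Composition.innerBoundaries_ofInnerBoundaries hS']
      using hS
  · intro S hS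
    exact Composition.innerBoundaries_ofInnerBoundaries
      ((mem_powerset.1 hS).trans c.innerBoundaries_subset_Ioo)
  · intro b _
    rw [c.length_eq_card_innerBoundaries_add_one hn, b.length_eq_card_innerBoundaries_add_one hn,
      Nat.add_sub_add_right, qtmultiC_eq_prod_nextAbove]

lemma hookComp_length (k m : ℕ) (hm : 0 < m) : (hookComp k m hm).length = k + 1 := by
  simp [hookComp, Composition.length]

lemma hookComp_sizeUpTo (k m : ℕ) (hm : 0 < m) {j : ℕ} (hj : j ≤ k) :
    (hookComp k m hm).sizeUpTo j = j := by
  simp [Composition.sizeUpTo, hookComp, List.take_append_of_le_length, hj, List.take_replicate]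

lemma innerBoundaries_hookComp (k m : ℕ) (hm : 0 < m) :
    (hookComp k m hm).innerBoundaries = Ioc 0 k := by
  ext x
  simp only [Composition.innerBoundaries, mem_filter, Composition.mem_map_boundaries,
    hookComp_length, mem_Ioc]
  constructor
  · rintro ⟨⟨j, hj, rfl⟩, h0, hn⟩
    rcases Nat.lt_or_ge j (k + 1) with hj' | hj'
    · rw [hookComp_sizeUpTo k m hm (by omega)] at h0 ⊢
      omega
    · exact absurd ((hookComp k m hm).sizeUpTo_ofLength_le j (by rw [hookComp_length]; omega)) hn
  · rintro ⟨h0, hk⟩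
    exact ⟨⟨x, by omega, hookComp_sizeUpTo k m hm hk⟩, by omega, by omega⟩

lemma pos_and_ne_zero_of_injective_pow_pow {F : Type*} [Field F] {q : ℕ} {s : F}
    (hu : Injective fun b : ℕ => s ^ q ^ b) : 0 < q ∧ s ≠ 0 := by
  have h12 : s ^ q ^ 1 ≠ s ^ q ^ 2 := hu.ne (by norm_num)
  have hq : 0 < q := Nat.pos_of_ne_zero fun hq => h12 (by simp [hq])
  exact ⟨hq, fun hs => h12 (by simp [hs, hq.ne'])⟩

lemma ribbonQT_hookComp {q k m : ℕ} (hm : 0 < m) {s : RatFunc ℚ}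
    (hu : Injective fun b : ℕ => s ^ q ^ b) :
    ribbonQT q (k + m) (hookComp k m hm) s
      = ∏ b ∈ Ioc 0 k, (s ^ q ^ (k + m) - s ^ q ^ b) / (s ^ q ^ b - s) := by
  obtain ⟨hq, hs⟩ := pos_and_ne_zero_of_injective_pow_pow hu
  have hsum := alternating_sum_nextAbove hu (show k < k + m by omega)
  simp only [pow_zero, pow_one] at hsum
  rw [ribbonQT_eq_sum_powerset q (by omega), innerBoundaries_hookComp, Nat.card_Ioc,
    Nat.sub_zero, ← hsum]
  refine sum_congr rfl fun S _ => congrArg _ (prod_congr rfl fun i hi => ?_)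
  have hi : i < k + m := mem_range.1 hi
  exact one_sub_pow_sub_div_one_sub_pow_sub hs (Nat.pow_le_pow_right hq hi.le)
    (Nat.pow_le_pow_right hq (lt_nextAbove hi).le)

end Ribbon

lemma Sspec_hookLam {q m k n : ℕ} (hk : k ≤ n) {t : RatFunc ℚ}
    (hx : Injective fun a : ℕ => t ^ q ^ a) :
    Sspec q (n + 1) (hookLam m k) t
      = (∏ i ∈ range (n - k), (t ^ q ^ (m + n) - t ^ q ^ i) / (t ^ q ^ (n - k) - t ^ q ^ i)) *
          ∏ a ∈ Ioc (n - k) n, (t ^ q ^ (m + n) - t ^ q ^ a) / (t ^ q ^ a - t ^ q ^ (n - k)) :=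
  prod_vandermonde_ratio hx (by omega) (μ := fun j => hookLam m k (n + 1 - j) + j)
    (fun j hj => by simp only [hookLam, succAbove]; split_ifs <;> omega)
    (by simp [hookLam])

lemma qtbin_eq_prod {q N c : ℕ} (hq : 0 < q) (hc : c ≤ N) {t : RatFunc ℚ} (ht : t ≠ 0) :
    qtbin q N c t = ∏ i ∈ range c, (t ^ q ^ N - t ^ q ^ i) / (t ^ q ^ c - t ^ q ^ i) :=
  prod_congr rfl fun _ hi => one_sub_pow_sub_div_one_sub_pow_sub ht
    (Nat.pow_le_pow_right hq ((mem_range.1 hi).le.trans hc))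
    (Nat.pow_le_pow_right hq (mem_range.1 hi).le)

lemma Sspec_hookLam_eq_qtbin_mul_ribbonQT {q m k n : ℕ} (hq : 2 ≤ q) (hm : 0 < m)
    (hk : k ≤ n) :
    Sspec q (n + 1) (hookLam m k) RatFunc.X
      = qtbin q (m + n) (n - k) RatFunc.X *
          ribbonQT q (k + m) (hookComp k m hm) (RatFunc.X ^ q ^ (n - k)) := by
  have hx : Injective fun a : ℕ => (RatFunc.X : RatFunc ℚ) ^ q ^ a :=
    RatFunc.X_pow_injective.comp (Nat.pow_right_injective hq)
  have hshift (b : ℕ) : ((RatFunc.X : RatFunc ℚ) ^ q ^ (n - k)) ^ q ^ b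
      = RatFunc.X ^ q ^ (n - k + b) := by rw [← pow_mul, ← pow_add]
  have hs : Injective fun b : ℕ => ((RatFunc.X : RatFunc ℚ) ^ q ^ (n - k)) ^ q ^ b := by
    simp only [hshift]
    exact hx.comp (add_right_injective _)
  have hIoc : Ioc (n - k) n = (Ioc 0 k).map (addLeftEmbedding (n - k)) := by
    rw [map_add_left_Ioc, Nat.add_zero, Nat.sub_add_cancel hk]
  rw [Sspec_hookLam hk hx, qtbin_eq_prod (by omega) (by omega) RatFunc.X_ne_zero,
    ribbonQT_hookComp hm hs, hIoc, prod_map]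
  simp only [hshift, addLeftEmbedding_apply, show n - k + (k + m) = m + n by omega]

/-- For the hook `λ = (m,1^k)` and reverse hook `α = (1^k,m)`:
`S_{(m,1^k)}(1,…,t^k) = r_{(1^k,m)}(q,t)`, and more generally, for `n ≥ k`,
`S_{(m,1^k)}(1,…,t^n) = [m+n choose n-k]_{q,t} · r_{(1^k,m)}(q, t^{q^{n-k}})`. -/
theorem hook_ribbon_coincidence (q m k n : ℕ) (hq : 2 ≤ q) (hm : 0 < m) (hk : k ≤ n) :
    Sspec q (k + 1) (hookLam m k) RatFunc.X
        = ribbonQT q (k + m) (hookComp k m hm) RatFunc.X ∧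
      Sspec q (n + 1) (hookLam m k) RatFunc.X
        = qtbin q (m + n) (n - k) RatFunc.X *
            ribbonQT q (k + m) (hookComp k m hm) (RatFunc.X ^ q ^ (n - k)) :=
  ⟨by simpa [qtbin] using Sspec_hookLam_eq_qtbin_mul_ribbonQT hq hm le_rfl,
    Sspec_hookLam_eq_qtbin_mul_ribbonQT hq hm hk⟩
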